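/- For real x, y > 0 and λ, μ > 0 with λμ = xy, R_F(x+λ, y+λ, λ) + R_F(x+μ, y+μ, μ) = R_F(x, y, 0). -/
import Mathlib


open MeasureTheory Real

noncomputable def RC (x y : ℝ) : ℝ :=
  (1/2) * ∫ t in Set.Ioi (0:ℝ), (Real.sqrt (t + x))⁻¹ * (t + y)⁻¹

noncomputable def RF (x y z : ℝ) : ℝ :=
  (1/2) * ∫ t in Set.Ioi (0:ℝ), (Real.sqrt ((t + x) * (t + y) * (t + z)))⁻¹

noncomputable def RD (x y z : ℝ) : ℝ :=
  (3/2) * ∫ t in Set.Ioi (0:ℝ),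
    (Real.sqrt ((t + x) * (t + y)))⁻¹ * ((t + z) * Real.sqrt (t + z))⁻¹

noncomputable def RJ (x y z p : ℝ) : ℝ :=
  (3/2) * ∫ t in Set.Ioi (0:ℝ),
    (Real.sqrt ((t + x) * (t + y) * (t + z)))⁻¹ * (t + p)⁻¹

noncomputable def RG (x y z : ℝ) : ℝ :=
  (1/4) * ∫ t in Set.Ioi (0:ℝ),
    (Real.sqrt ((t + x) * (t + y) * (t + z)))⁻¹ *
      (x / (t + x) + y / (t + y) + z / (t + z)) * t

open Set
-- the integrand of RF x y 0
noncomputable def gg (x y t : ℝ) : ℝ := (Real.sqrt ((t + x) * (t + y) * t))⁻¹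

lemma gg_meas (x y : ℝ) : Measurable (gg x y) := by
  unfold gg
  exact ((Real.continuous_sqrt.comp (by continuity)).measurable).inv

lemma gg_nonneg (x y t : ℝ) : 0 ≤ gg x y t :=
  inv_nonneg.mpr (Real.sqrt_nonneg _)

-- translation lemma: RF (x+l) (y+l) l = (1/2) ∫_{Ioi l} gg
lemma shift_lemma (x y l : ℝ) :
    RF (x + l) (y + l) l = (1/2) * ∫ t in Ioi l, gg x y t := by
  unfold RF
  congr 1
  have himg : (fun s : ℝ => s + l) '' Ioi 0 = Ioi l := by
    ext u; simp only [mem_image, mem_Ioi]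
    constructor
    · rintro ⟨s, hs, rfl⟩; linarith
    · intro hu; exact ⟨u - l, by linarith, by ring⟩
  have := integral_image_eq_integral_abs_deriv_smul (s := Ioi (0:ℝ)) (f := fun s : ℝ => s + l)
    (f' := fun _ => (1:ℝ)) measurableSet_Ioi
    (fun s _ => ((hasDerivAt_id s).add_const l).hasDerivWithinAt)
    (fun a _ b _ h => by simpa using h) (gg x y)
  rw [himg] at this
  rw [this]
  apply setIntegral_congr_fun measurableSet_Ioi
  intro s hs
  unfold gg
  simp only [abs_one, one_smul]
  ring_nf

lemma gg_integrable (x y : ℝ) (hx : 0 < x) (hy : 0 < y) :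
    IntegrableOn (gg x y) (Ioi (0:ℝ)) := by
  have h01 : IntegrableOn (gg x y) (Ioc (0:ℝ) 1) := by
    have hb : IntegrableOn (fun t : ℝ => (Real.sqrt (x*y))⁻¹ * t ^ (-(1/2):ℝ)) (Ioc (0:ℝ) 1) := by
      have h := intervalIntegral.intervalIntegrable_rpow' (a := (0:ℝ)) (b := 1)
        (r := (-(1/2):ℝ)) (by norm_num)
      rw [intervalIntegrable_iff_integrableOn_Ioc_of_le (by norm_num)] at h
      exact h.const_mul _
    apply Integrable.mono' hb ((gg_meas x y).aestronglyMeasurable)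
    filter_upwards [ae_restrict_mem measurableSet_Ioc] with t ht
    obtain ⟨ht0, _⟩ := ht
    have h1 : x * y * t ≤ (t + x) * (t + y) * t := by nlinarith [mul_nonneg (mul_nonneg ht0.le ht0.le) ht0.le, mul_nonneg (add_pos hx hy).le (mul_nonneg ht0.le ht0.le)]
    have h2 : (0:ℝ) < Real.sqrt (x * y * t) := Real.sqrt_pos.mpr (by positivity)
    have h3 : Real.sqrt (x * y * t) ≤ Real.sqrt ((t + x) * (t + y) * t) :=
      Real.sqrt_le_sqrt h1
    have h4 : gg x y t ≤ (Real.sqrt (x * y * t))⁻¹ := by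
      unfold gg; exact inv_anti₀ h2 h3
    have h5 : (Real.sqrt (x * y * t))⁻¹ = (Real.sqrt (x*y))⁻¹ * t ^ (-(1/2):ℝ) := by
      rw [Real.sqrt_mul (by positivity), mul_inv, Real.rpow_neg ht0.le,
        ← Real.sqrt_eq_rpow]
    rw [norm_of_nonneg (gg_nonneg x y t)]
    rw [← h5]; exact h4
  have h1i : IntegrableOn (gg x y) (Ioi (1:ℝ)) := by
    have hb : IntegrableOn (fun t : ℝ => t ^ (-(3/2):ℝ)) (Ioi (1:ℝ)) :=
      integrableOn_Ioi_rpow_of_lt (by norm_num) one_pos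
    apply Integrable.mono' hb ((gg_meas x y).aestronglyMeasurable)
    filter_upwards [ae_restrict_mem measurableSet_Ioi] with t ht
    have ht0 : (0:ℝ) < t := lt_trans one_pos ht
    have h1 : t ^ 3 ≤ (t + x) * (t + y) * t := by nlinarith [mul_nonneg (add_pos hx hy).le (mul_nonneg ht0.le ht0.le), mul_nonneg (mul_pos hx hy).le ht0.le]
    have h2 : (0:ℝ) < Real.sqrt (t ^ 3) := Real.sqrt_pos.mpr (by positivity)
    have h4 : gg x y t ≤ (Real.sqrt (t ^ 3))⁻¹ := by
      unfold gg; exact inv_anti₀ h2 (Real.sqrt_le_sqrt h1)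
    have h5 : (Real.sqrt (t ^ 3))⁻¹ = t ^ (-(3/2):ℝ) := by
      rw [Real.sqrt_eq_rpow, ← Real.rpow_natCast t 3, ← Real.rpow_mul ht0.le,
        Real.rpow_neg ht0.le]
      norm_num
    rw [norm_of_nonneg (gg_nonneg x y t), ← h5]; exact h4
  have := h01.union h1i
  rwa [Ioc_union_Ioi_eq_Ioi (zero_le_one)] at this

lemma invol (x y l m : ℝ) (hx : 0 < x) (hy : 0 < y) (hl : 0 < l) (hm : 0 < m)
    (hlm : l * m = x * y) :
    ∫ t in Ioi m, gg x y t = ∫ t in Ioo (0:ℝ) l, gg x y t := by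
  have hc : 0 < x * y := mul_pos hx hy
  have himg : (fun t : ℝ => x*y/t) '' Ioi m = Ioo (0:ℝ) l := by
    ext u; simp only [mem_image, mem_Ioi, mem_Ioo]
    constructor
    · rintro ⟨t, ht, rfl⟩
      have ht0 : 0 < t := hm.trans ht
      refine ⟨by positivity, ?_⟩
      rw [div_lt_iff₀ ht0]
      nlinarith
    · rintro ⟨hu0, hul⟩
      refine ⟨x*y/u, ?_, ?_⟩
      · rw [lt_div_iff₀ hu0]; nlinarith
      · field_simp
  have hderiv : ∀ t ∈ Ioi m, HasDerivWithinAt (fun t : ℝ => x*y/t)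
      (-(x*y/t^2)) (Ioi m) t := by
    intro t ht
    have ht0 : t ≠ 0 := ne_of_gt (hm.trans ht)
    have h := (hasDerivAt_inv ht0).const_mul (x*y)
    have heq : -(x*y/t^2) = x*y * (-(t^2)⁻¹) := by field_simp
    rw [heq]
    exact (h.congr_of_eventuallyEq (by
      filter_upwards with s using (div_eq_mul_inv _ _))).hasDerivWithinAt
  have hinj : InjOn (fun t : ℝ => x*y/t) (Ioi m) := by
    intro a ha b hb h
    simp only [mem_Ioi] at ha hb
    have ha0 : a ≠ 0 := ne_of_gt (hm.trans ha)
    have hb0 : b ≠ 0 := ne_of_gt (hm.trans hb)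
    field_simp at h
    exact h.symm
  have key := integral_image_eq_integral_abs_deriv_smul (s := Ioi m)
    measurableSet_Ioi hderiv hinj (gg x y)
  rw [himg] at key
  rw [key]
  apply setIntegral_congr_fun measurableSet_Ioi
  intro t ht
  simp only [mem_Ioi] at ht
  have ht0 : 0 < t := hm.trans ht
  have habs : |(-(x*y/t^2))| = x*y/t^2 := by
    rw [abs_neg, abs_of_pos (by positivity)]
  simp only [smul_eq_mul]
  rw [habs]
  have hP : (x*y/t + x) * (x*y/t + y) * (x*y/t)
      = (x*y/t^2)^2 * ((t + x) * (t + y) * t) := by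
    field_simp; ring
  unfold gg
  rw [hP, Real.sqrt_mul (sq_nonneg _), Real.sqrt_sq (by positivity), mul_inv,
    ← mul_assoc, mul_inv_cancel₀ (by positivity), one_mul]

theorem stmt13 (x y l m : ℝ) (hx : 0 < x) (hy : 0 < y)
    (hl : 0 < l) (hm : 0 < m) (hlm : l * m = x * y) :
    RF (x + l) (y + l) l + RF (x + m) (y + m) m = RF x y 0 := by
  have hInt : IntegrableOn (gg x y) (Ioi (0:ℝ)) := gg_integrable x y hx hy
  rw [shift_lemma x y l, shift_lemma x y m, invol x y l m hx hy hl hm hlm]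
  have hRF0 : RF x y 0 = (1/2) * ∫ t in Ioi (0:ℝ), gg x y t := by
    unfold RF gg
    norm_num
  rw [hRF0, ← mul_add]
  congr 1
  rw [← integral_Ioc_eq_integral_Ioo, add_comm,
    ← setIntegral_union (Ioc_disjoint_Ioi le_rfl) measurableSet_Ioi
      (hInt.mono_set Ioc_subset_Ioi_self) (hInt.mono_set (Ioi_subset_Ioi hl.le)),
    Ioc_union_Ioi_eq_Ioi hl.le]
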